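/- arXiv:2605.15390 — 6 statements merged into one kernel-verified Lean document; each statement's English description precedes it below -/
import Mathlib

section
/- Let A be a Büchi automaton in which every nondeterministic branching occurs only outside non-trivial SCCs (i.e., for any transitions q →ᵃ p and q →ᵃ r with p ≠ r, neither p nor r lies in the same SCC as q). Then for every infinite word w, the number of distinct runs of A on w is finite; in fact it is bounded by a constant depending only on A (e.g., |Q| · (number of SccIndices) suffices as a bound on the number of runs distinguishable at any point, and the run DAG of A over w has finitely many infinite branches). -/
/-- A (transition-based) Büchi automaton over alphabet `A` with states `Q`:
transition relation `δ`, initial states `I`, accepting transitions `F`. -/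
structure BA (Q A : Type) where
  δ : Set (Q × A × Q)
  I : Set Q
  F : Set (Q × A × Q)

variable {Q A : Type}

/-- `ρ` is a run of `M` on the infinite word `w` (starting at `ρ 0`). -/
def BA.IsRun (M : BA Q A) (w : ℕ → A) (ρ : ℕ → Q) : Prop :=
  ∀ i, (ρ i, w i, ρ (i + 1)) ∈ M.δ

/-- The run `ρ` takes accepting transitions infinitely often. -/
def BA.InfAcc (M : BA Q A) (w : ℕ → A) (ρ : ℕ → Q) : Prop :=
  ∀ N, ∃ i ≥ N, (ρ i, w i, ρ (i + 1)) ∈ M.F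

/-- The ω-language of the Büchi automaton `M`. -/
def BA.Lang (M : BA Q A) : Set (ℕ → A) :=
  {w | ∃ ρ : ℕ → Q, ρ 0 ∈ M.I ∧ M.IsRun w ρ ∧ M.InfAcc w ρ}

/-- One-step successor relation of `M`. -/
def BA.Step (M : BA Q A) (q r : Q) : Prop := ∃ a, (q, a, r) ∈ M.δ

/-- Reachability along transitions of `M`. -/
def BA.Reach (M : BA Q A) : Q → Q → Prop := Relation.ReflTransGen M.Step

/-- Mutual reachability. -/
def BA.SameSCC (M : BA Q A) (q r : Q) : Prop := M.Reach q r ∧ M.Reach r q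

/-- `C` is a strongly connected component of `M` (an equivalence class of
mutual reachability). -/
def BA.IsSCC (M : BA Q A) (C : Set Q) : Prop := ∃ q : Q, C = {r | M.SameSCC q r}

/-- `C` is accepting: it contains an accepting transition with both endpoints in `C`. -/
def BA.AccSCC (M : BA Q A) (C : Set Q) : Prop :=
  ∃ t : Q × A × Q, t ∈ M.F ∧ t ∈ M.δ ∧ t.1 ∈ C ∧ t.2.2 ∈ C

/-- A cycle within `C`: a nonempty closed finite path of transitions all of whose
states lie in `C`. -/
def BA.IsCycleIn (M : BA Q A) (C : Set Q) (n : ℕ) (σ : ℕ → Q) (a : ℕ → A) : Prop :=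
  0 < n ∧ σ 0 = σ n ∧ ∀ j < n, σ j ∈ C ∧ (σ j, a j, σ (j + 1)) ∈ M.δ

/-- `C` is inherently weak accepting: every cycle within `C` contains an accepting
transition. -/
def BA.IWA (M : BA Q A) (C : Set Q) : Prop :=
  ∀ n σ a, M.IsCycleIn C n σ a → ∃ j < n, (σ j, a j, σ (j + 1)) ∈ M.F

/-- `C` is inherently weak rejecting: no cycle within `C` contains an accepting
transition. -/
def BA.IWR (M : BA Q A) (C : Set Q) : Prop :=
  ∀ n σ a, M.IsCycleIn C n σ a → ∀ j < n, (σ j, a j, σ (j + 1)) ∉ M.F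

/-- Successors of a set of states over a letter. -/
def BA.post (M : BA Q A) (S : Set Q) (a : A) : Set Q := {r | ∃ q ∈ S, (q, a, r) ∈ M.δ}

/-- The subset-construction run `S₀ = I`, `S_{i+1} = δ(S_i, w i)`. -/
def BA.subsetRun (M : BA Q A) (w : ℕ → A) : ℕ → Set Q
  | 0 => M.I
  | i + 1 => M.post (M.subsetRun w i) (w i)

/-! The rank of a state, the number of states reachable from it, never increases along a run,
and by the branching hypothesis it strictly drops at every step where two runs sharing a state
separate. Hence the run is determined by the states it occupies when its rank first falls to
at most `r`, for `r = 0, …, |Q|`, and there are at most `|Q| ^ (|Q| + 1)` runs. -/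

section RankCode

variable {α : Type*} (rk : α → ℕ)

noncomputable def firstRankLE (ρ : ℕ → α) (r : ℕ) : α := ρ (sInf {j | rk (ρ j) ≤ r})

variable {rk}

lemma firstRankLE_of_le {ρ : ℕ → α} {r : ℕ} (h : rk (ρ 0) ≤ r) : firstRankLE rk ρ r = ρ 0 := by
  rw [firstRankLE, Nat.sInf_eq_zero.mpr (Or.inl h)]

lemma firstRankLE_of_le_of_lt {ρ : ℕ → α} (hρ : Antitone (rk ∘ ρ)) {i r : ℕ}
    (hle : rk (ρ (i + 1)) ≤ r) (hlt : r < rk (ρ i)) : firstRankLE rk ρ r = ρ (i + 1) := by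
  have hclosed : ∀ j k, j ≤ k → j ∈ {j | rk (ρ j) ≤ r} → k ∈ {j | rk (ρ j) ≤ r} :=
    fun _ _ hjk hj => (hρ hjk).trans hj
  rw [firstRankLE, (Nat.sInf_upward_closed_eq_succ_iff hclosed i).mpr ⟨hle, hlt.not_ge⟩]

lemma injOn_firstRankLE {S : Set (ℕ → α)} {N : ℕ} (hN : ∀ a, rk a ≤ N)
    (hanti : ∀ ρ ∈ S, Antitone (rk ∘ ρ))
    (hdrop : ∀ ρ ∈ S, ∀ ρ' ∈ S, ∀ i, ρ i = ρ' i → ρ (i + 1) ≠ ρ' (i + 1) →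
      rk (ρ (i + 1)) < rk (ρ i)) :
    S.InjOn fun ρ (r : Fin (N + 1)) => firstRankLE rk ρ r := by
  intro ρ hρ ρ' hρ' hcode
  have hcode (r : ℕ) (hr : r ≤ N) : firstRankLE rk ρ r = firstRankLE rk ρ' r :=
    congrFun hcode ⟨r, Nat.lt_succ_of_le hr⟩
  funext i
  induction i with
  | zero => simpa only [firstRankLE_of_le (hN _)] using hcode N le_rfl
  | succ i ih =>
    by_contra hne
    have hlt : rk (ρ (i + 1)) < rk (ρ i) := hdrop ρ hρ ρ' hρ' i ih hne
    have hlt' : rk (ρ' (i + 1)) < rk (ρ' i) := hdrop ρ' hρ' ρ hρ i ih.symm (Ne.symm hne)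
    rw [← ih] at hlt'
    set m := max (rk (ρ (i + 1))) (rk (ρ' (i + 1)))
    have hm : m < rk (ρ i) := max_lt hlt hlt'
    apply hne
    calc ρ (i + 1) = firstRankLE rk ρ m :=
          (firstRankLE_of_le_of_lt (hanti ρ hρ) (le_max_left _ _) hm).symm
      _ = firstRankLE rk ρ' m := hcode m (max_le (hN _) (hN _))
      _ = ρ' (i + 1) := firstRankLE_of_le_of_lt (hanti ρ' hρ') (le_max_right _ _) (ih ▸ hm)

theorem finite_and_ncard_le_of_rank_drop [Fintype α] {S : Set (ℕ → α)} {N : ℕ}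
    (hN : ∀ a, rk a ≤ N) (hanti : ∀ ρ ∈ S, Antitone (rk ∘ ρ))
    (hdrop : ∀ ρ ∈ S, ∀ ρ' ∈ S, ∀ i, ρ i = ρ' i → ρ (i + 1) ≠ ρ' (i + 1) →
      rk (ρ (i + 1)) < rk (ρ i)) :
    S.Finite ∧ S.ncard ≤ Fintype.card α ^ (N + 1) := by
  have hinj := injOn_firstRankLE hN hanti hdrop
  refine ⟨Set.Finite.of_finite_image (Set.toFinite _) hinj, ?_⟩
  calc S.ncard = ((fun ρ (r : Fin (N + 1)) => firstRankLE rk ρ r) '' S).ncard :=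
        hinj.ncard_image.symm
    _ ≤ Nat.card (Fin (N + 1) → α) := Set.ncard_le_card _
    _ = Fintype.card α ^ (N + 1) := by simp

end RankCode

namespace BA

variable [Fintype Q] (M : BA Q A)

noncomputable def rank (q : Q) : ℕ := {p | M.Reach q p}.ncard

lemma rank_le_card (q : Q) : M.rank q ≤ Fintype.card Q :=
  (Set.ncard_le_card _).trans_eq Nat.card_eq_fintype_card

variable {M}

lemma rank_le_of_step {q p : Q} (h : M.Step q p) : M.rank p ≤ M.rank q :=
  Set.ncard_le_ncard (fun _ hr => Relation.ReflTransGen.head h hr) (Set.toFinite _)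

lemma rank_lt_of_not_sameSCC {q p : Q} {a : A} (h : (q, a, p) ∈ M.δ) (hqp : ¬ M.SameSCC q p) :
    M.rank p < M.rank q := by
  refine Set.ncard_lt_ncard ⟨fun _ hr => Relation.ReflTransGen.head ⟨a, h⟩ hr, fun hsub => ?_⟩
    (Set.toFinite _)
  exact hqp ⟨Relation.ReflTransGen.single ⟨a, h⟩, hsub Relation.ReflTransGen.refl⟩

lemma IsRun.antitone_rank {w : ℕ → A} {ρ : ℕ → Q} (hρ : M.IsRun w ρ) : Antitone (M.rank ∘ ρ) :=
  antitone_nat_of_succ_le fun i => rank_le_of_step ⟨w i, hρ i⟩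

end BA

theorem finitely_many_runs_general [Fintype Q] (M : BA Q A)
    (hbr : ∀ q a p r, (q, a, p) ∈ M.δ → (q, a, r) ∈ M.δ → p ≠ r →
      ¬ M.SameSCC q p ∧ ¬ M.SameSCC q r) :
    ∃ n : ℕ, ∀ w : ℕ → A,
      {ρ : ℕ → Q | ρ 0 ∈ M.I ∧ M.IsRun w ρ}.Finite ∧
      {ρ : ℕ → Q | ρ 0 ∈ M.I ∧ M.IsRun w ρ}.ncard ≤ n := by
  refine ⟨Fintype.card Q ^ (Fintype.card Q + 1), fun w => ?_⟩
  refine finite_and_ncard_le_of_rank_drop M.rank_le_card (fun ρ hρ => hρ.2.antitone_rank) ?_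
  rintro ρ ⟨-, hρ⟩ ρ' ⟨-, hρ'⟩ i hi hne
  have hbranch : (ρ i, w i, ρ' (i + 1)) ∈ M.δ := hi ▸ hρ' i
  exact BA.rank_lt_of_not_sameSCC (hρ i) (hbr _ _ _ _ (hρ i) hbranch hne).1

/-- if every nondeterministic branching of `M` occurs only outside
non-trivial SCCs (for transitions `q →ᵃ p`, `q →ᵃ r` with `p ≠ r`, neither `p` nor `r`
lies in the same SCC as `q`), then for every infinite word the set of runs of `M` from
the initial states is finite, with a uniform bound depending only on `M`. -/
theorem finitely_many_runs [Fintype Q] [Fintype A] (M : BA Q A)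
    (hbr : ∀ q a p r, (q, a, p) ∈ M.δ → (q, a, r) ∈ M.δ → p ≠ r →
      ¬ M.SameSCC q p ∧ ¬ M.SameSCC q r) :
    ∃ n : ℕ, ∀ w : ℕ → A,
      {ρ : ℕ → Q | ρ 0 ∈ M.I ∧ M.IsRun w ρ}.Finite ∧
      {ρ : ℕ → Q | ρ 0 ∈ M.I ∧ M.IsRun w ρ}.ncard ≤ n :=
  finitely_many_runs_general M hbr
end

section
/- In an inherently weak SCC C of a Büchi automaton (one where either every cycle within C contains an accepting transition, or no cycle within C contains an accepting transition), a run that eventually stays in C is accepting if and only if C is of the first kind (all cycles accepting) and the run is eventually trapped in C. Consequently, acceptance of such runs can be decided without tracking which accepting transitions are visited. -/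
variable {Q A : Type}

/-- Aux: within an SCC, reachability gives a finite path staying inside the SCC. -/
lemma path_in_scc (M : BA Q A) (q0 : Q) (a0 : A) {q r : Q}
    (h : Relation.ReflTransGen M.Step q r) :
    M.SameSCC q0 r → M.SameSCC q0 q →
    ∃ (n : ℕ) (σ : ℕ → Q) (a : ℕ → A), σ 0 = q ∧ σ n = r ∧
      ∀ j < n, M.SameSCC q0 (σ j) ∧ (σ j, a j, σ (j + 1)) ∈ M.δ := by
  induction h using Relation.ReflTransGen.head_induction_on with
  | refl =>
    intro _ _
    exact ⟨0, fun _ => r, fun _ => a0, rfl, rfl, by omega⟩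
  | head h' h ih =>
    intro hr hq
    rename_i x c
    obtain ⟨b, hb⟩ := h'
    have hc : M.SameSCC q0 c :=
      ⟨hq.1.trans (Relation.ReflTransGen.single ⟨b, hb⟩), h.trans hr.2⟩
    obtain ⟨n, σ, a, hσ0, hσn, hall⟩ := ih hr hc
    refine ⟨n + 1, fun j => Nat.casesOn j x σ, fun j => Nat.casesOn j b a,
      rfl, hσn, ?_⟩
    rintro (_ | j) hj
    · simpa [hσ0] using ⟨hq, hb⟩
    · exact hall j (by omega)

/-- for an inherently weak SCC `C` (all cycles accepting, or no cycle
accepting), a run that eventually stays in `C` is accepting iff `C` is inherently weak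
accepting. -/
theorem inherently_weak_acceptance [Fintype Q] (M : BA Q A) (C : Set Q)
    (hSCC : M.IsSCC C) (hweak : M.IWA C ∨ M.IWR C)
    (w : ℕ → A) (ρ : ℕ → Q) (hrun : M.IsRun w ρ)
    (N : ℕ) (htrap : ∀ i ≥ N, ρ i ∈ C) :
    M.InfAcc w ρ ↔ M.IWA C := by
  obtain ⟨q0, hC⟩ := hSCC
  constructor
  · intro hacc
    rcases hweak with hIWA | hIWR
    · exact hIWA
    · exfalso
      obtain ⟨i, hiN, hiF⟩ := hacc N
      have h1 : ρ i ∈ C := htrap i hiN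
      have h2 : ρ (i + 1) ∈ C := htrap (i + 1) (by omega)
      rw [hC] at h1 h2
      have hreach : Relation.ReflTransGen M.Step (ρ (i + 1)) (ρ i) :=
        h2.2.trans h1.1
      obtain ⟨n, σ, a, hσ0, hσn, hall⟩ := path_in_scc M q0 (w i) hreach h1 h2
      have hcyc : M.IsCycleIn C (n + 1)
          (fun j => Nat.casesOn j (ρ i) σ) (fun j => Nat.casesOn j (w i) a) := by
        refine ⟨by omega, by simpa using hσn.symm, ?_⟩
        rintro (_ | j) hj
        · exact ⟨htrap i hiN, by simpa [hσ0] using hrun i⟩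
        · have := hall j (by omega)
          exact ⟨by rw [hC]; exact this.1, this.2⟩
      exact hIWR (n + 1) _ _ hcyc 0 (by omega) (by simpa [hσ0] using hiF)
  · intro hIWA N'
    cases isEmpty_or_nonempty Q with
    | inl h => exact (h.false (ρ 0)).elim
    | inr h =>
      set N2 := max N N' with hN2
      obtain ⟨i, j, hij, heq⟩ :=
        Finite.exists_ne_map_eq_of_infinite (fun k : ℕ => ρ (N2 + k))
      rcases Nat.lt_or_ge i j with hlt | hge
      case _ hlt =>
        have hcyc : M.IsCycleIn C (j - i)
            (fun k => ρ (N2 + i + k)) (fun k => w (N2 + i + k)) := by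
          refine ⟨by omega, ?_, ?_⟩
          · show ρ (N2 + i + 0) = ρ (N2 + i + (j - i))
            have : N2 + i + (j - i) = N2 + j := by omega
            rw [this]; simpa using heq
          · intro k hk
            refine ⟨htrap _ (by omega), ?_⟩
            show (ρ (N2 + i + k), w (N2 + i + k), ρ (N2 + i + (k + 1))) ∈ M.δ
            have : N2 + i + (k + 1) = N2 + i + k + 1 := by omega
            rw [this]; exact hrun _
        obtain ⟨k, hk, hkF⟩ := hIWA _ _ _ hcyc
        refine ⟨N2 + i + k, by omega, ?_⟩
        have e : N2 + i + (k + 1) = N2 + i + k + 1 := by omega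
        simpa [e] using hkF
      case _ hge =>
        have hlt : j < i := lt_of_le_of_ne hge (fun e => hij e.symm)
        have hcyc : M.IsCycleIn C (i - j)
            (fun k => ρ (N2 + j + k)) (fun k => w (N2 + j + k)) := by
          refine ⟨by omega, ?_, ?_⟩
          · show ρ (N2 + j + 0) = ρ (N2 + j + (i - j))
            have : N2 + j + (i - j) = N2 + i := by omega
            rw [this]; simpa using heq.symm
          · intro k hk
            refine ⟨htrap _ (by omega), ?_⟩
            show (ρ (N2 + j + k), w (N2 + j + k), ρ (N2 + j + (k + 1))) ∈ M.δ
            have : N2 + j + (k + 1) = N2 + j + k + 1 := by omega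
            rw [this]; exact hrun _
        obtain ⟨k, hk, hkF⟩ := hIWA _ _ _ hcyc
        refine ⟨N2 + j + k, by omega, ?_⟩
        have e : N2 + j + (k + 1) = N2 + j + k + 1 := by omega
        simpa [e] using hkF
end

section
/- Let A be a Büchi automaton in which all nondeterministic branching occurs outside non-trivial SCCs (for transitions q →ᵃ p and q →ᵃ r with p ≠ r, neither p nor r is in the SCC of q, for non-trivial SCCs). Then a word w is accepted by A if and only if in the subset-construction run S₀, S₁, S₂, ... (with S₀ = I, S_{i+1} = ⋃_{q ∈ S_i} δ(q, w(i))) there exists an SCC C and infinitely many positions i such that some transition from S_i ∩ C over w(i) into C is accepting. -/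
variable {Q A : Type}

-- basic infinite/unbounded lemmas
lemma infinite_of_unbounded {s : Set ℕ} (h : ∀ N, ∃ i ≥ N, i ∈ s) : s.Infinite := by
  intro hfin
  obtain ⟨N, hN⟩ := hfin.bddAbove
  obtain ⟨i, hiN, his⟩ := h (N + 1)
  exact absurd (hN his) (by omega)

lemma unbounded_of_infinite {s : Set ℕ} (h : s.Infinite) : ∀ N, ∃ i ≥ N, i ∈ s := by
  intro N
  by_contra hc
  push_neg at hc
  exact h (Set.Finite.subset (Set.finite_Iio N) (fun i his => by
    by_contra h'
    exact hc i (by simpa using h') his))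

lemma exists_infinite_fiber' {β : Type} [Finite β] {s : Set ℕ} (hs : s.Infinite)
    (f : ℕ → β) : ∃ b, {i ∈ s | f i = b}.Infinite := by
  by_contra hc
  push_neg at hc
  have : s ⊆ ⋃ b : β, {i ∈ s | f i = b} := fun i hi => Set.mem_iUnion.2 ⟨f i, hi, rfl⟩
  exact hs (Set.Finite.subset (Set.finite_iUnion hc) this)

/-- Infinite Ramsey theorem for (ordered) pairs with finitely many colors. -/
lemma ramsey_pairs {β : Type} [Finite β] [Nonempty β] (c : ℕ → ℕ → β) :
    ∃ b : β, ∃ M : Set ℕ, M.Infinite ∧ ∀ i ∈ M, ∀ j ∈ M, i < j → c i j = b := by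
  have step : ∀ J : Set ℕ, J.Infinite → ∃ n ∈ J, ∃ b : β, ∃ J' : Set ℕ, J'.Infinite ∧
      J' ⊆ J ∧ ∀ j ∈ J', n < j ∧ c n j = b := by
    intro J hJ
    obtain ⟨n, hn⟩ := hJ.nonempty
    have h1 : ({j ∈ J | n < j} : Set ℕ).Infinite := by
      have := hJ.diff (Set.finite_Iic n)
      refine this.mono (fun j hj => ?_)
      exact ⟨hj.1, by simpa using hj.2⟩
    obtain ⟨b, hb⟩ := exists_infinite_fiber' h1 (c n)
    exact ⟨n, hn, b, _, hb, fun j hj => hj.1.1, fun j hj => ⟨hj.1.2, hj.2⟩⟩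
  choose nn hmem bb JJ hinf hsub hprop using step
  let g : ℕ → {J : Set ℕ // J.Infinite} := fun k =>
    Nat.rec ⟨Set.univ, Set.infinite_univ⟩ (fun _ p => ⟨JJ p.1 p.2, hinf p.1 p.2⟩) k
  have hg : ∀ k, (g (k + 1)).1 = JJ (g k).1 (g k).2 := fun k => rfl
  set n : ℕ → ℕ := fun k => nn (g k).1 (g k).2 with hn
  set b : ℕ → β := fun k => bb (g k).1 (g k).2 with hb
  have hmono : ∀ k m, k ≤ m → (g m).1 ⊆ (g k).1 := by
    intro k m hkm
    induction m, hkm using Nat.le_induction with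
    | base => exact subset_rfl
    | succ m hkm ih => exact (hg m ▸ hsub (g m).1 (g m).2).trans ih
  have key : ∀ k m, k < m → n k < n m ∧ c (n k) (n m) = b k := by
    intro k m hkm
    have h1 : n m ∈ (g m).1 := hmem _ _
    have h2 : n m ∈ (g (k + 1)).1 := hmono _ _ hkm h1
    rw [hg k] at h2
    exact hprop (g k).1 (g k).2 _ h2
  obtain ⟨b₀, hb₀⟩ := exists_infinite_fiber' (Set.infinite_univ (α := ℕ)) b
  refine ⟨b₀, n '' {k | b k = b₀}, ?_, ?_⟩
  · refine Set.Infinite.image ?_ (by simpa [Set.sep_univ] using hb₀)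
    intro x hx y hy hxy
    rcases lt_trichotomy x y with h | h | h
    · exact absurd hxy (Nat.ne_of_lt (key x y h).1)
    · exact h
    · exact absurd hxy.symm (Nat.ne_of_lt (key y x h).1)
  · rintro i ⟨k, hk, rfl⟩ j ⟨m, hm, rfl⟩ hij
    rcases lt_trichotomy k m with h | h | h
    · rw [(key k m h).2, hk]
    · exact absurd hij (by simp [h])
    · exact absurd hij (by have := (key m k h).1; omega)

namespace BA

lemma sameSCC_symm {M : BA Q A} {q r : Q} (h : M.SameSCC q r) : M.SameSCC r q := ⟨h.2, h.1⟩

lemma sameSCC_trans {M : BA Q A} {q r s : Q} (h1 : M.SameSCC q r) (h2 : M.SameSCC r s) :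
    M.SameSCC q s := ⟨h1.1.trans h2.1, h2.2.trans h1.2⟩

lemma reach_seg {M : BA Q A} {w : ℕ → A} (p : ℕ → Q) {i j : ℕ} (hij : i ≤ j)
    (hp : ∀ m, i ≤ m → m < j → (p m, w m, p (m + 1)) ∈ M.δ) : M.Reach (p i) (p j) := by
  induction j, hij using Nat.le_induction with
  | base => exact Relation.ReflTransGen.refl
  | succ j hij ih =>
    exact (ih (fun m h1 h2 => hp m h1 (by omega))).tail ⟨w j, hp j hij (by omega)⟩

lemma mem_subsetRun_iff (M : BA Q A) (w : ℕ → A) (n : ℕ) (q : Q) :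
    q ∈ M.subsetRun w n ↔
      ∃ p : ℕ → Q, p 0 ∈ M.I ∧ (∀ i < n, (p i, w i, p (i + 1)) ∈ M.δ) ∧ p n = q := by
  induction n generalizing q with
  | zero =>
    constructor
    · intro h; exact ⟨fun _ => q, h, by omega, rfl⟩
    · rintro ⟨p, h0, _, hn⟩; exact hn ▸ h0
  | succ n ih =>
    constructor
    · rintro ⟨q', hq', hδ⟩
      obtain ⟨p, h0, hsteps, hn⟩ := (ih q').1 hq'
      refine ⟨fun m => if m ≤ n then p m else q, by simp [h0], ?_, by simp⟩
      intro i hi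
      rcases Nat.lt_or_ge i n with h | h
      · simpa [Nat.le_of_lt h, Nat.succ_le_of_lt h] using hsteps i h
      · have : i = n := by omega
        subst this
        simpa [hn] using hδ
    · rintro ⟨p, h0, hsteps, hn⟩
      exact ⟨p n, (ih (p n)).2 ⟨p, h0, fun i hi => hsteps i (by omega), rfl⟩,
        hn ▸ hsteps n (by omega)⟩

lemma run_mem_subsetRun {M : BA Q A} {w : ℕ → A} {ρ : ℕ → Q} (h0 : ρ 0 ∈ M.I)
    (hρ : M.IsRun w ρ) (n : ℕ) : ρ n ∈ M.subsetRun w n :=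
  (mem_subsetRun_iff M w n (ρ n)).2 ⟨ρ, h0, fun i _ => hρ i, rfl⟩

end BA


lemma sameSCC_refl (M : BA Q A) (q : Q) : M.SameSCC q q :=
  ⟨Relation.ReflTransGen.refl, Relation.ReflTransGen.refl⟩

lemma agree_of_hbr {M : BA Q A} {w : ℕ → A}
    (hbr : ∀ q a p r, (q, a, p) ∈ M.δ → (q, a, r) ∈ M.δ → p ≠ r →
      ¬ M.SameSCC q p ∧ ¬ M.SameSCC q r)
    (p p' : ℕ → Q) {i j : ℕ} (hij : i ≤ j)
    (hp : ∀ m, i ≤ m → m < j → (p m, w m, p (m + 1)) ∈ M.δ)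
    (hp' : ∀ m, i ≤ m → m < j → (p' m, w m, p' (m + 1)) ∈ M.δ)
    (hsc : M.SameSCC (p' i) (p' j))
    (heq : p i = p' i) : ∀ m, i ≤ m → m ≤ j → p m = p' m := by
  intro m him hmj
  induction m, him using Nat.le_induction with
  | base => exact heq
  | succ m him ih =>
    have hmj' : m < j := by omega
    have h1 : p m = p' m := ih (by omega)
    have r1 : M.Reach (p' i) (p' m) :=
      BA.reach_seg p' him (fun k hk1 hk2 => hp' k hk1 (by omega))
    have r2 : M.Reach (p' (m + 1)) (p' j) :=
      BA.reach_seg p' (show m + 1 ≤ j by omega) (fun k hk1 hk2 => hp' k (by omega) hk2)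
    have hscm : M.SameSCC (p' m) (p' (m + 1)) :=
      ⟨Relation.ReflTransGen.single ⟨w m, hp' m him hmj'⟩, r2.trans (hsc.2.trans r1)⟩
    have hstep : (p' m, w m, p (m + 1)) ∈ M.δ := by rw [← h1]; exact hp m him hmj'
    by_contra hne
    exact (hbr (p' m) (w m) (p' (m + 1)) (p (m + 1)) (hp' m him hmj') hstep
      (fun h => hne h.symm)).1 hscm


/-- if all nondeterministic branching of `M` occurs outside non-trivial
SCCs, then a word `w` is accepted by `M` iff in the subset-construction run
`S₀ = I, S_{i+1} = δ(S_i, w i)` there is an SCC `C` and infinitely many positions `i`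
such that some transition from `S_i ∩ C` over `w i` into `C` is accepting. -/
theorem acceptance_via_subset_run [Fintype Q] [Fintype A] (M : BA Q A) (hF : M.F ⊆ M.δ)
    (hbr : ∀ q a p r, (q, a, p) ∈ M.δ → (q, a, r) ∈ M.δ → p ≠ r →
      ¬ M.SameSCC q p ∧ ¬ M.SameSCC q r)
    (w : ℕ → A) :
    w ∈ M.Lang ↔
      ∃ C : Set Q, M.IsSCC C ∧
        ∀ N, ∃ i ≥ N, ∃ q ∈ M.subsetRun w i ∩ C, ∃ r ∈ C, (q, w i, r) ∈ M.F := by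
  classical
  have hdet : ∀ q a r x, M.SameSCC q r → (q, a, r) ∈ M.δ → (q, a, x) ∈ M.δ → x = r := by
    intro q a r x hsc hr hx
    by_contra hne
    exact (hbr q a r x hr hx (fun h => hne h.symm)).1 hsc
  constructor
  · rintro ⟨ρ, h0, hrun, hacc⟩
    have hsinf : ({i | (ρ i, w i, ρ (i + 1)) ∈ M.F}).Infinite :=
      infinite_of_unbounded (fun N => by obtain ⟨i, hiN, hi⟩ := hacc N; exact ⟨i, hiN, hi⟩)
    obtain ⟨⟨q, r⟩, hfib⟩ := exists_infinite_fiber' hsinf (fun i => (ρ i, ρ (i + 1)))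
    have hfacts : ∀ m ∈ {i ∈ {i | (ρ i, w i, ρ (i + 1)) ∈ M.F} | (ρ i, ρ (i + 1)) = (q, r)},
        ρ m = q ∧ ρ (m + 1) = r ∧ (q, w m, r) ∈ M.F := by
      rintro m ⟨h1, h2⟩
      obtain ⟨e1, e2⟩ := Prod.mk.injEq .. ▸ h2
      have h1' : (ρ m, w m, ρ (m + 1)) ∈ M.F := h1
      refine ⟨e1, e2, ?_⟩
      rwa [e1, e2] at h1'
    obtain ⟨i, _, hi⟩ := unbounded_of_infinite hfib 0
    obtain ⟨i', hi'ge, hi'⟩ := unbounded_of_infinite hfib (i + 1)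
    obtain ⟨hq, hr, hFqr⟩ := hfacts i hi
    obtain ⟨hq', hr', _⟩ := hfacts i' hi'
    have hreach1 : M.Reach q r := Relation.ReflTransGen.single ⟨w i, hF hFqr⟩
    have hreach2 : M.Reach r q := by
      have := BA.reach_seg (M := M) (w := w) ρ (show i + 1 ≤ i' by omega)
        (fun m _ _ => hrun m)
      rwa [hr, hq'] at this
    refine ⟨{x | M.SameSCC q x}, ⟨q, rfl⟩, fun N => ?_⟩
    obtain ⟨m, hmN, hm⟩ := unbounded_of_infinite hfib N
    obtain ⟨hqm, hrm, hFm⟩ := hfacts m hm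
    have hqS : q ∈ M.subsetRun w m := by
      have := BA.run_mem_subsetRun h0 hrun m; rwa [hqm] at this
    exact ⟨m, hmN, q, ⟨hqS, sameSCC_refl M q⟩, r, ⟨hreach1, hreach2⟩, hFm⟩
  · rintro ⟨C, ⟨q₀, hq₀C⟩, hGood⟩
    subst hq₀C
    set G : Set ℕ :=
      {i | ∃ q ∈ M.subsetRun w i ∩ {r | M.SameSCC q₀ r}, ∃ r ∈ {r | M.SameSCC q₀ r},
        (q, w i, r) ∈ M.F} with hGdef
    have hGinf : G.Infinite :=
      infinite_of_unbounded (fun N => by obtain ⟨i, h1, h2⟩ := hGood N; exact ⟨i, h1, h2⟩)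
    obtain ⟨i₀, _, hGi₀⟩ := unbounded_of_infinite hGinf 0
    obtain ⟨qq, _, _⟩ := hGi₀
    haveI : Nonempty Q := ⟨qq⟩
    have hchoice : ∀ i : ℕ, ∃ qr : Q × Q, i ∈ G →
        qr.1 ∈ M.subsetRun w i ∧ M.SameSCC q₀ qr.1 ∧ M.SameSCC q₀ qr.2 ∧
          (qr.1, w i, qr.2) ∈ M.F := by
      intro i
      by_cases h : i ∈ G
      · obtain ⟨q, ⟨hqS, hqC⟩, r, hrC, hF'⟩ := h
        exact ⟨(q, r), fun _ => ⟨hqS, hqC, hrC, hF'⟩⟩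
      · exact ⟨(Classical.arbitrary Q, Classical.arbitrary Q), fun h' => absurd h' h⟩
    choose qr hqr using hchoice
    obtain ⟨⟨qs, rs⟩, hfib⟩ := exists_infinite_fiber' hGinf qr
    set G₁ : Set ℕ := {i ∈ G | qr i = (qs, rs)} with hG₁def
    have hG₁inf : G₁.Infinite := hfib
    have hG₁ : ∀ i ∈ G₁, qs ∈ M.subsetRun w i ∧ M.SameSCC q₀ qs ∧ M.SameSCC q₀ rs ∧
        (qs, w i, rs) ∈ M.F := by
      rintro i ⟨hiG, hieq⟩
      have h := hqr i hiG
      rwa [hieq] at h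
    obtain ⟨j₀, _, hj₀⟩ := unbounded_of_infinite hG₁inf 0
    have hsc : M.SameSCC qs rs :=
      BA.sameSCC_trans (BA.sameSCC_symm (hG₁ j₀ hj₀).2.1) (hG₁ j₀ hj₀).2.2.1
    have hpath : ∀ j : ℕ, ∃ p : ℕ → Q, j ∈ G₁ →
        p 0 ∈ M.I ∧ (∀ m < j, (p m, w m, p (m + 1)) ∈ M.δ) ∧ p j = qs := by
      intro j
      by_cases h : j ∈ G₁
      · obtain ⟨p, h1, h2, h3⟩ := (BA.mem_subsetRun_iff M w j qs).1 (hG₁ j h).1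
        exact ⟨p, fun _ => ⟨h1, h2, h3⟩⟩
      · exact ⟨fun _ => Classical.arbitrary Q, fun h' => absurd h' h⟩
    choose p hp using hpath
    set u : ℕ → ℕ := Nat.nth (· ∈ G₁) with hudef
    have hu_mem : ∀ k, u k ∈ G₁ := fun k => Nat.nth_mem_of_infinite hG₁inf k
    have hu_mono : StrictMono u := Nat.nth_strictMono hG₁inf
    obtain ⟨b, MM, hMMinf, hhom⟩ := ramsey_pairs (fun k m => p (u m) (u k))
    obtain ⟨k₁, _, hk₁⟩ := unbounded_of_infinite hMMinf 0
    obtain ⟨k₂, hk₂ge, hk₂⟩ := unbounded_of_infinite hMMinf (k₁ + 1)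
    obtain ⟨k₃, hk₃ge, hk₃⟩ := unbounded_of_infinite hMMinf (k₂ + 1)
    have hij : u k₁ < u k₂ := hu_mono (by omega)
    have hjj' : u k₂ < u k₃ := hu_mono (by omega)
    have e1 : p (u k₂) (u k₁) = b := hhom k₁ hk₁ k₂ hk₂ (by omega)
    have e2 : p (u k₃) (u k₁) = b := hhom k₁ hk₁ k₃ hk₃ (by omega)
    have e3 : p (u k₃) (u k₂) = b := hhom k₂ hk₂ k₃ hk₃ (by omega)
    have hpj := hp (u k₂) (hu_mem k₂)
    have hpj' := hp (u k₃) (hu_mem k₃)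
    have hagree := agree_of_hbr hbr (p (u k₂)) (p (u k₃)) (le_of_lt hij)
      (fun m h1 h2 => hpj.2.1 m (by omega))
      (fun m h1 h2 => hpj'.2.1 m (by omega))
      (by rw [e2, e3]; exact sameSCC_refl M b)
      (by rw [e1, e2])
    have h4 := hagree (u k₂) (le_of_lt hij) le_rfl
    rw [hpj.2.2, e3] at h4
    rw [← h4] at hhom
    set v : ℕ → ℕ := Nat.nth (· ∈ MM) with hvdef
    have hv_mem : ∀ t, v t ∈ MM := fun t => Nat.nth_mem_of_infinite hMMinf t
    have hv_mono : StrictMono v := Nat.nth_strictMono hMMinf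
    have he_mono : StrictMono (fun t => u (v t)) := hu_mono.comp hv_mono
    set e : ℕ → ℕ := fun t => u (v t) with hedef
    have heG₁ : ∀ t, e t ∈ G₁ := fun t => hu_mem (v t)
    have hPq : ∀ s t, s ≤ t → p (e t) (e s) = qs := by
      intro s t hst
      rcases eq_or_lt_of_le hst with rfl | h
      · exact (hp (e s) (heG₁ s)).2.2
      · exact hhom (v s) (hv_mem s) (v t) (hv_mem t) (hv_mono h)
    have hPfull : ∀ k, (p (e k)) 0 ∈ M.I ∧
        ∀ m < e k, ((p (e k)) m, w m, (p (e k)) (m + 1)) ∈ M.δ :=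
      fun k => ⟨(hp (e k) (heG₁ k)).1, (hp (e k) (heG₁ k)).2.1⟩
    have hex : ∀ n : ℕ, ∃ k, n ≤ e k := fun n => ⟨n, he_mono.le_apply⟩
    set kk : ℕ → ℕ := fun n => Nat.find (hex n) with hkkdef
    have hkk_le : ∀ n, n ≤ e (kk n) := fun n => Nat.find_spec (hex n)
    have hkk_mono : ∀ n, kk n ≤ kk (n + 1) :=
      fun n => Nat.find_min' (hex n) (le_trans (by omega) (hkk_le (n + 1)))
    have hkey : ∀ (n K0 K1 : ℕ), K0 ≤ K1 → e K0 = n → n < e K1 →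
        (p (e K0) n, w n, p (e K1) (n + 1)) ∈ M.δ := by
      intro n K0 K1 hK hK0 hK1
      have hA : p (e K0) n = qs := by rw [← hK0]; exact hPq K0 K0 le_rfl
      have hB : p (e K1) n = qs := by rw [← hK0]; exact hPq K0 K1 hK
      rw [hA, ← hB]
      exact (hPfull K1).2 n hK1
    have hrun : M.IsRun w (fun n => p (e (kk n)) n) := by
      intro n
      show (p (e (kk n)) n, w n, p (e (kk (n + 1))) (n + 1)) ∈ M.δ
      rcases eq_or_lt_of_le (hkk_mono n) with heq | hlt
      · rw [← heq]
        exact (hPfull (kk n)).2 n (by have := hkk_le (n + 1); rw [← heq] at this; omega)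
      · have h1 : ¬ (n + 1 ≤ e (kk n)) := Nat.find_min (hex (n + 1)) hlt
        have h2 : e (kk n) = n := by have := hkk_le n; omega
        exact hkey n (kk n) (kk (n + 1)) (le_of_lt hlt) h2
          (by have := hkk_le (n + 1); omega)
    refine ⟨fun n => p (e (kk n)) n, (hPfull (kk 0)).1, hrun, fun N => ?_⟩
    have hkkn : kk (e N) = N := by
      have h1 : kk (e N) ≤ N := Nat.find_min' (hex (e N)) le_rfl
      rcases eq_or_lt_of_le h1 with h | h
      · exact h
      · exact absurd (hkk_le (e N)) (by have := he_mono h; omega)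
    have hρn : p (e (kk (e N))) (e N) = qs := by
      rw [hkkn]
      exact hPq N N le_rfl
    have hFn : (qs, w (e N), rs) ∈ M.F := (hG₁ (e N) (heG₁ N)).2.2.2
    have hstep : (p (e (kk (e N))) (e N), w (e N), p (e (kk (e N + 1))) (e N + 1)) ∈ M.δ :=
      hrun (e N)
    rw [hρn] at hstep
    have hρn1 : p (e (kk (e N + 1))) (e N + 1) = rs :=
      hdet qs (w (e N)) rs _ hsc (hF hFn) hstep
    refine ⟨e N, he_mono.le_apply, ?_⟩
    show (p (e (kk (e N))) (e N), w (e N), p (e (kk (e N + 1))) (e N + 1)) ∈ M.F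
    rw [hρn, hρn1]
    exact hFn
end

section
/- The Miyano–Hayashi breakpoint construction is correct for complementing inherently weak Büchi automata: let A = (Q, δ, I, F) be a Büchi automaton in which every accepting SCC is inherently weak accepting (every cycle inside it is accepting) and every other SCC contains no accepting transition. Let Acc ⊆ Q be the union of accepting SCCs. Define the automaton B with states {(S, B) : B ⊆ S ∩ Acc ⊆ Q}, initial state (I, I ∩ Acc), transitions (S,B) →ᵃ (S', B') where S' = δ(S,a), and B' = δ(B,a) ∩ Acc if B ≠ ∅, else B' = S' ∩ Acc; a transition is marked accepting iff B = ∅. Then with Büchi acceptance (accepting transitions infinitely often), L(B) = Σ^ω \ L(A). -/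
variable {Q A : Type}

/-- The union of the accepting SCCs of `M`. -/
def BA.AccStates (M : BA Q A) : Set Q := {q | ∃ C : Set Q, M.IsSCC C ∧ M.AccSCC C ∧ q ∈ C}

open scoped Classical in
/-- The (deterministic) run of the Miyano–Hayashi breakpoint automaton on `w`:
states `(S, B)` with breakpoint set `B`, initial state `(I, I ∩ Acc)`,
`(S,B) →ᵃ (S', B')` with `S' = δ(S,a)` and `B' = δ(B,a) ∩ Acc` if `B ≠ ∅`,
else `B' = S' ∩ Acc`. -/
noncomputable def mhRun (M : BA Q A) (Acc : Set Q) (w : ℕ → A) : ℕ → Set Q × Set Q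
  | 0 => (M.I, M.I ∩ Acc)
  | i + 1 =>
      let p := mhRun M Acc w i
      (M.post p.1 (w i),
        if p.2 = ∅ then M.post p.1 (w i) ∩ Acc else M.post p.2 (w i) ∩ Acc)

namespace MH
variable (M : BA Q A) (Acc : Set Q) (w : ℕ → A)

lemma mh_fst (i : ℕ) : (mhRun M Acc w (i+1)).1 = M.post (mhRun M Acc w i).1 (w i) := rfl

open scoped Classical in
lemma mh_snd (i : ℕ) : (mhRun M Acc w (i+1)).2 =
    if (mhRun M Acc w i).2 = ∅ then M.post (mhRun M Acc w i).1 (w i) ∩ Acc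
    else M.post (mhRun M Acc w i).2 (w i) ∩ Acc := rfl

lemma B_sub_Acc (i : ℕ) : (mhRun M Acc w i).2 ⊆ Acc := by
  cases i with
  | zero => exact Set.inter_subset_right
  | succ i =>
      rw [mh_snd]
      split <;> exact Set.inter_subset_right

lemma B_sub_S (i : ℕ) : (mhRun M Acc w i).2 ⊆ (mhRun M Acc w i).1 := by
  induction i with
  | zero => exact Set.inter_subset_left
  | succ i ih =>
      rw [mh_snd, mh_fst]
      split
      · exact Set.inter_subset_left
      · rintro x ⟨⟨p, hp, hδ⟩, -⟩
        exact ⟨p, ih hp, hδ⟩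

lemma run_reach (ρ : ℕ → Q) (hρ : M.IsRun w ρ) {i j : ℕ} (hij : i ≤ j) :
    M.Reach (ρ i) (ρ j) := by
  induction j, hij using Nat.le_induction with
  | base => exact Relation.ReflTransGen.refl
  | succ j hij ih => exact ih.tail ⟨w j, hρ j⟩

lemma sameSCC_refl (q : Q) : M.SameSCC q q :=
  ⟨Relation.ReflTransGen.refl, Relation.ReflTransGen.refl⟩

lemma sameSCC_trans {q r s : Q} (h1 : M.SameSCC q r) (h2 : M.SameSCC r s) : M.SameSCC q s :=
  ⟨h1.1.trans h2.1, h2.2.trans h1.2⟩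

lemma scc_eq {C : Set Q} {q : Q} (hC : M.IsSCC C) (hq : q ∈ C) :
    C = {r | M.SameSCC q r} := by
  obtain ⟨q0, rfl⟩ := hC
  have hq0q : M.SameSCC q0 q := hq
  ext r
  constructor
  · intro hr; exact ⟨hq0q.2.trans hr.1, hr.2.trans hq0q.1⟩
  · intro hr; exact sameSCC_trans M hq0q hr

lemma accscc_sub {C : Set Q} (hC : M.IsSCC C) (hCA : M.AccSCC C) : C ⊆ M.AccStates :=
  fun r hr => ⟨C, hC, hCA, hr⟩

lemma rho_in_S (ρ : ℕ → Q) (hI : ρ 0 ∈ M.I) (hρ : M.IsRun w ρ) (i : ℕ) :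
    ρ i ∈ (mhRun M Acc w i).1 := by
  induction i with
  | zero => exact hI
  | succ i ih => exact ⟨ρ i, ih, hρ i⟩

lemma path_from_I (m : ℕ) (q : Q) (hq : q ∈ (mhRun M Acc w m).1) :
    ∃ σ : ℕ → Q, σ 0 ∈ M.I ∧ σ m = q ∧ ∀ j < m, (σ j, w j, σ (j + 1)) ∈ M.δ := by
  induction m generalizing q with
  | zero => exact ⟨fun _ => q, hq, rfl, by omega⟩
  | succ m ih =>
      obtain ⟨p, hp, hδ⟩ := hq
      obtain ⟨σ, h0, hm, hsteps⟩ := ih p hp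
      refine ⟨Function.update σ (m+1) q, ?_, by simp, ?_⟩
      · rwa [Function.update_of_ne (by omega)]
      · intro j hj
        rcases Nat.lt_succ_iff_lt_or_eq.mp hj with hj' | rfl
        · rw [Function.update_of_ne (by omega), Function.update_of_ne (by omega)]
          exact hsteps j hj'
        · rw [Function.update_of_ne (by omega), Function.update_self, hm]
          exact hδ


/-- A path from `q` at time `i` up to time `m`, staying in the breakpoint sets. -/
def PathB (i m : ℕ) (q : Q) : Prop :=
  ∃ σ : ℕ → Q, σ i = q ∧ ∀ j, i ≤ j → j < m →
    (σ j, w j, σ (j + 1)) ∈ M.δ ∧ σ (j + 1) ∈ (mhRun M Acc w (j + 1)).2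

lemma pathB_trunc {i m m' : ℕ} {q : Q} (h : PathB M Acc w i m q) (hm : m' ≤ m) :
    PathB M Acc w i m' q := by
  obtain ⟨σ, h1, h2⟩ := h
  exact ⟨σ, h1, fun j hj hj' => h2 j hj (by omega)⟩

lemma exists_pathB {N : ℕ} (hne : ∀ i, N ≤ i → (mhRun M Acc w i).2 ≠ ∅)
    (m : ℕ) (hm : N ≤ m) : ∃ p ∈ (mhRun M Acc w N).2, PathB M Acc w N m p := by
  have key : ∀ k, ∀ q ∈ (mhRun M Acc w (N + k)).2, ∃ σ : ℕ → Q,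
      σ N ∈ (mhRun M Acc w N).2 ∧ σ (N + k) = q ∧
      ∀ j, N ≤ j → j < N + k →
        (σ j, w j, σ (j + 1)) ∈ M.δ ∧ σ (j + 1) ∈ (mhRun M Acc w (j + 1)).2 := by
    intro k
    induction k with
    | zero => exact fun q hq => ⟨fun _ => q, hq, rfl, by omega⟩
    | succ k ih =>
        intro q hq
        have hq0 : q ∈ (mhRun M Acc w (N + k + 1)).2 := hq
        have hBne : (mhRun M Acc w (N + k)).2 ≠ ∅ := hne _ (by omega)
        rw [show N + (k+1) = (N + k) + 1 from rfl, mh_snd, if_neg hBne] at hq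
        obtain ⟨⟨p, hp, hδ⟩, _⟩ := hq
        obtain ⟨σ, h1, h2, h3⟩ := ih p hp
        refine ⟨Function.update σ (N + k + 1) q, ?_, ?_, ?_⟩
        · rwa [Function.update_of_ne (by omega)]
        · show Function.update σ (N + k + 1) q (N + k + 1) = q
          rw [Function.update_self]
        · intro j hj hj'
          by_cases hcase : j < N + k
          · rw [Function.update_of_ne (by omega), Function.update_of_ne (by omega)]
            exact h3 j hj hcase
          · have hjeq : j = N + k := by omega
            subst hjeq
            rw [Function.update_of_ne (by omega), Function.update_self, h2]
            exact ⟨hδ, hq0⟩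
  obtain ⟨q, hq⟩ := Set.nonempty_iff_ne_empty.mpr (hne m hm)
  have := key (m - N) q (by rw [Nat.add_sub_cancel' hm]; exact hq)
  rw [Nat.add_sub_cancel' hm] at this
  obtain ⟨σ, h1, _, h3⟩ := this
  exact ⟨σ N, h1, σ, rfl, h3⟩

lemma pigeon [Fintype Q] (P : Q → Prop) (b : ℕ)
    (h : ∀ m, b ≤ m → ∃ r, P r ∧ PathB M Acc w b m r) :
    ∃ r, P r ∧ ∀ m, b ≤ m → PathB M Acc w b m r := by
  by_contra hc
  push_neg at hc
  have h2 : ∀ r : Q, ∃ m, (P r → ¬ PathB M Acc w b m r) := by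
    intro r
    by_cases hr : P r
    · obtain ⟨m, _, hm2⟩ := hc r hr
      exact ⟨m, fun _ => hm2⟩
    · exact ⟨b, fun h' => absurd h' hr⟩
  choose f hf using h2
  obtain ⟨r, hPr, hpath⟩ := h (max b (Finset.univ.sup f)) (le_max_left _ _)
  exact hf r hPr (pathB_trunc M Acc w hpath
    (le_trans (Finset.le_sup (Finset.mem_univ r)) (le_max_right _ _)))

/-- `q` is in `B i` and has arbitrarily long forward paths staying in `B`. -/
def Ext (i : ℕ) (q : Q) : Prop :=
  q ∈ (mhRun M Acc w i).2 ∧ ∀ m, i ≤ m → PathB M Acc w i m q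

lemma ext_start [Fintype Q] {N : ℕ} (hne : ∀ i, N ≤ i → (mhRun M Acc w i).2 ≠ ∅) :
    ∃ q, Ext M Acc w N q := by
  obtain ⟨r, h1, h2⟩ := pigeon M Acc w (fun q => q ∈ (mhRun M Acc w N).2) N
    (fun m hm => by obtain ⟨p, hp1, hp2⟩ := exists_pathB M Acc w hne m hm; exact ⟨p, hp1, hp2⟩)
  exact ⟨r, h1, h2⟩

lemma ext_step [Fintype Q] {i : ℕ} {q : Q} (hq : Ext M Acc w i q) :
    ∃ r, (q, w i, r) ∈ M.δ ∧ Ext M Acc w (i + 1) r := by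
  have h : ∀ m, i + 1 ≤ m → ∃ r, ((q, w i, r) ∈ M.δ ∧ r ∈ (mhRun M Acc w (i+1)).2) ∧
      PathB M Acc w (i + 1) m r := by
    intro m hm
    obtain ⟨σ, hσi, hσ⟩ := hq.2 m (by omega)
    have hi := hσ i (le_refl i) (by omega)
    rw [hσi] at hi
    exact ⟨σ (i + 1), ⟨hi.1, hi.2⟩, σ, rfl, fun j hj hj' => hσ j (by omega) hj'⟩
  obtain ⟨r, ⟨h1, h2⟩, h3⟩ := pigeon M Acc w _ (i + 1) h
  exact ⟨r, h1, h2, h3⟩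


lemma infacc_eventually_acc [Fintype Q] (hF : M.F ⊆ M.δ) (ρ : ℕ → Q)
    (hρ : M.IsRun w ρ) (hacc : M.InfAcc w ρ) :
    ∃ n, ∀ j, n ≤ j → ρ j ∈ M.AccStates := by
  have hu : ∀ n : ℕ, ∃ i, n ≤ i ∧ (ρ i, w i, ρ (i + 1)) ∈ M.F := by
    intro n; obtain ⟨i, h1, h2⟩ := hacc n; exact ⟨i, h1, h2⟩
  choose g hg1 hg2 using hu
  let u : ℕ → ℕ := fun n => Nat.rec (g 0) (fun _ p => g (p + 1)) n
  have humono : StrictMono u := strictMono_nat_of_lt_succ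
    (fun n => lt_of_lt_of_le (Nat.lt_succ_self _) (hg1 (u n + 1)))
  have huF : ∀ n, (ρ (u n), w (u n), ρ (u n + 1)) ∈ M.F := by
    intro n
    cases n with
    | zero => exact hg2 0
    | succ k => exact hg2 (u k + 1)
  obtain ⟨⟨q, r⟩, hfib⟩ := Finite.exists_infinite_fiber (fun n => (ρ (u n), ρ (u n + 1)))
  have hT : Set.Infinite ((fun n => (ρ (u n), ρ (u n + 1))) ⁻¹' {(q, r)}) :=
    Set.infinite_coe_iff.mp hfib
  have hTmem : ∀ n ∈ (fun n => (ρ (u n), ρ (u n + 1))) ⁻¹' {(q, r)},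
      ρ (u n) = q ∧ ρ (u n + 1) = r := by
    intro n hn
    simp only [Set.mem_preimage, Set.mem_singleton_iff, Prod.mk.injEq] at hn
    exact hn
  obtain ⟨n₀, hn₀⟩ := hT.nonempty
  obtain ⟨hq0, hr0⟩ := hTmem n₀ hn₀
  -- q and r are in the same SCC
  have hqr : M.SameSCC q r := by
    constructor
    · exact Relation.ReflTransGen.single ⟨w (u n₀), hq0 ▸ hr0 ▸ hF (huF n₀)⟩
    · obtain ⟨n₁, hn₁T, hn₁⟩ := hT.exists_gt n₀
      obtain ⟨hq1, _⟩ := hTmem n₁ hn₁T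
      have : M.Reach (ρ (u n₀ + 1)) (ρ (u n₁)) :=
        run_reach M w ρ hρ (by have := humono hn₁; omega)
      rwa [hr0, hq1] at this
  set C : Set Q := {s | M.SameSCC q s} with hCdef
  have hCscc : M.IsSCC C := ⟨q, rfl⟩
  have hCacc : M.AccSCC C :=
    ⟨(q, w (u n₀), r), hq0 ▸ hr0 ▸ huF n₀, hq0 ▸ hr0 ▸ hF (huF n₀),
      sameSCC_refl M q, hqr⟩
  refine ⟨u n₀, fun j hj => accscc_sub M hCscc hCacc ?_⟩
  -- ρ j ∈ C
  have h1 : M.Reach q (ρ j) := hq0 ▸ run_reach M w ρ hρ hj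
  obtain ⟨n₂, hn₂T, hn₂⟩ := hT.exists_gt j
  obtain ⟨hq2, _⟩ := hTmem n₂ hn₂T
  have h2 : M.Reach (ρ j) q := hq2 ▸ run_reach M w ρ hρ (by
    have : n₂ ≤ u n₂ := humono.le_apply; omega)
  exact ⟨h1, h2⟩

lemma run_tail_acc_infacc [Fintype Q]
    (hweak : ∀ C : Set Q, M.IsSCC C → M.AccSCC C → M.IWA C) (ρ : ℕ → Q)
    (hρ : M.IsRun w ρ) (N : ℕ) (hA : ∀ j, N ≤ j → ρ j ∈ M.AccStates) :
    M.InfAcc w ρ := by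
  obtain ⟨q, hfib⟩ := Finite.exists_infinite_fiber (fun k => ρ (N + k))
  have hT : Set.Infinite ((fun k => ρ (N + k)) ⁻¹' {q}) := Set.infinite_coe_iff.mp hfib
  have hTmem : ∀ k ∈ (fun k => ρ (N + k)) ⁻¹' {q}, ρ (N + k) = q := fun k hk => hk
  obtain ⟨k₀, hk₀⟩ := hT.nonempty
  have hqA : q ∈ M.AccStates := hTmem k₀ hk₀ ▸ hA (N + k₀) (Nat.le_add_right _ _)
  obtain ⟨C, hC, hCA, hqC⟩ := hqA
  have hCeq : C = {r | M.SameSCC q r} := scc_eq M hC hqC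
  have hiwa : M.IWA C := hweak C hC hCA
  intro N₁
  obtain ⟨k₁, hk₁T, hk₁⟩ := hT.exists_gt N₁
  obtain ⟨k₂, hk₂T, hk₂⟩ := hT.exists_gt k₁
  set i := N + k₁ with hidef
  set j := N + k₂ with hjdef
  have hij : i < j := by omega
  have hρi : ρ i = q := hTmem k₁ hk₁T
  have hρj : ρ j = q := hTmem k₂ hk₂T
  have hcy : M.IsCycleIn C (j - i) (fun t => ρ (i + t)) (fun t => w (i + t)) := by
    refine ⟨by omega, ?_, ?_⟩
    · show ρ (i + 0) = ρ (i + (j - i))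
      rw [Nat.add_zero, Nat.add_sub_cancel' (le_of_lt hij), hρi, hρj]
    · intro t ht
      refine ⟨?_, hρ (i + t)⟩
      rw [hCeq]
      refine ⟨hρi ▸ run_reach M w ρ hρ (Nat.le_add_right i t), ?_⟩
      exact hρj ▸ run_reach M w ρ hρ (by omega)
  obtain ⟨t, ht, htF⟩ := hiwa _ _ _ hcy
  exact ⟨i + t, by omega, htF⟩

end MH

/-- the Miyano–Hayashi breakpoint construction complements inherently
weak Büchi automata: if every accepting SCC of `M` is inherently weak accepting
(and non-accepting SCCs contain no accepting transition), then the words whose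
breakpoint run has `B = ∅` infinitely often (i.e., takes accepting transitions of the
breakpoint automaton infinitely often) are exactly `Σ^ω \ L(A)`. -/
theorem miyano_hayashi_correct [Fintype Q] (M : BA Q A) (hF : M.F ⊆ M.δ)
    (hweak : ∀ C : Set Q, M.IsSCC C → M.AccSCC C → M.IWA C) :
    {w : ℕ → A | ∀ N, ∃ i ≥ N, (mhRun M M.AccStates w i).2 = ∅} =
      {w : ℕ → A | w ∉ M.Lang} := by
  ext w
  simp only [Set.mem_setOf_eq]
  constructor
  · -- B empties infinitely often → no accepting run
    rintro hB ⟨ρ, hρI, hρrun, hρacc⟩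
    obtain ⟨n, hn⟩ := MH.infacc_eventually_acc M w hF ρ hρrun hρacc
    obtain ⟨i, hi, hBi⟩ := hB n
    have hstep : ∀ k, ρ (i + 1 + k) ∈ (mhRun M M.AccStates w (i + 1 + k)).2 := by
      intro k
      induction k with
      | zero =>
          rw [Nat.add_zero, MH.mh_snd, if_pos hBi]
          exact ⟨MH.rho_in_S M M.AccStates w ρ hρI hρrun (i + 1), hn (i + 1) (by omega)⟩
      | succ k ih =>
          have hne : (mhRun M M.AccStates w (i + 1 + k)).2 ≠ ∅ :=
            Set.nonempty_iff_ne_empty.mp ⟨_, ih⟩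
          rw [show i + 1 + (k + 1) = (i + 1 + k) + 1 from rfl, MH.mh_snd, if_neg hne]
          exact ⟨⟨ρ (i + 1 + k), ih, hρrun (i + 1 + k)⟩, hn _ (by omega)⟩
    obtain ⟨i', hi', hBi'⟩ := hB (i + 1)
    have h := hstep (i' - (i + 1))
    rw [Nat.add_sub_cancel' hi'] at h
    rw [hBi'] at h
    exact h
  · -- no accepting run → B empties infinitely often
    intro hw
    by_contra hB
    push_neg at hB
    obtain ⟨N, hN⟩ := hB
    have hN' : ∀ i, N ≤ i → (mhRun M M.AccStates w i).2 ≠ ∅ :=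
      fun i hi => Set.nonempty_iff_ne_empty.mp (hN i hi)
    obtain ⟨q₀, hq₀⟩ := MH.ext_start M M.AccStates w hN'
    have hstep : ∀ (i : ℕ) (p : {q : Q // MH.Ext M M.AccStates w i q}),
        ∃ r : {r : Q // MH.Ext M M.AccStates w (i + 1) r}, (p.1, w i, r.1) ∈ M.δ := by
      intro i p
      obtain ⟨r, hδ, hr⟩ := MH.ext_step M M.AccStates w p.2
      exact ⟨⟨r, hr⟩, hδ⟩
    choose f hf using hstep
    let τ : (k : ℕ) → {q : Q // MH.Ext M M.AccStates w (N + k) q} :=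
      fun k => Nat.rec ⟨q₀, hq₀⟩ (fun k p => f (N + k) p) k
    set ν : ℕ → Q := fun k => (τ k).1 with hνdef
    have hνstep : ∀ k, (ν k, w (N + k), ν (k + 1)) ∈ M.δ := fun k => hf (N + k) (τ k)
    have hνB : ∀ k, ν k ∈ (mhRun M M.AccStates w (N + k)).2 := fun k => (τ k).2.1
    have hν0 : ν 0 = q₀ := rfl
    have hq₀S : q₀ ∈ (mhRun M M.AccStates w N).1 :=
      MH.B_sub_S M M.AccStates w N (hνB 0)
    obtain ⟨σ, hσI, hσN, hσsteps⟩ := MH.path_from_I M M.AccStates w N q₀ hq₀S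
    set ρ : ℕ → Q := fun j => if j < N then σ j else ν (j - N) with hρdef
    have hρat : ∀ j, N ≤ j → ρ j = ν (j - N) := by
      intro j hj; simp only [hρdef, if_neg (by omega : ¬ j < N)]
    have hρbefore : ∀ j, j < N → ρ j = σ j := by
      intro j hj; simp only [hρdef, if_pos hj]
    have hρN : ρ N = q₀ := by
      rw [hρat N (le_refl N), Nat.sub_self, hν0]
    have hρ0 : ρ 0 ∈ M.I := by
      cases Nat.eq_zero_or_pos N with
      | inl h =>
          subst h
          rw [hρN]
          exact (hνB 0).1
      | inr h => rw [hρbefore 0 h]; exact hσI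
    have hρrun : M.IsRun w ρ := by
      intro j
      rcases lt_trichotomy (j + 1) N with h | h | h
      · rw [hρbefore j (by omega), hρbefore (j + 1) h]
        exact hσsteps j (by omega)
      · have e : ρ (j + 1) = σ (j + 1) := by
          rw [hρat (j + 1) (by omega), show j + 1 - N = 0 by omega, hν0, h]
          exact hσN.symm
        rw [hρbefore j (by omega), e]
        exact hσsteps j (by omega)
      · have hjN : N ≤ j := by omega
        rw [hρat j hjN, hρat (j + 1) (by omega)]
        have hkey := hνstep (j - N)
        rw [Nat.add_sub_cancel' hjN] at hkey
        rw [show j + 1 - N = (j - N) + 1 by omega]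
        exact hkey
    have hρAcc : ∀ j, N ≤ j → ρ j ∈ M.AccStates := by
      intro j hj
      rw [hρat j hj]
      exact MH.B_sub_Acc M M.AccStates w (N + (j - N)) (hνB (j - N))
    exact hw ⟨ρ, hρ0, hρrun, MH.run_tail_acc_infacc M w hweak ρ hρrun N hρAcc⟩
end

section
/- Language emptiness of a simple generalized Rabin automaton reduces to reachable-SCC analysis of the ⓪-free subautomaton: L(A) ≠ ∅ iff there exists a set of states D, all mutually reachable using only non-⓪ transitions, such that D is reachable from I in A (possibly using ⓪-transitions), and the non-⓪ transitions inside D carry together all colours ①, ..., ⓚ₋₁ on some cycle within D. -/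
/-- A (transition-based) simple generalized Rabin automaton with `k` colours
`⓪, ①, …, ⓚ₋₁` (represented as `Fin k`, with `⓪ = 0`) and acceptance condition
`Fin(⓪) ∧ Inf(①) ∧ … ∧ Inf(ⓚ₋₁)`. -/
structure SGRA (Q A : Type) (k : ℕ) where
  δ : Set (Q × A × Q)
  I : Set Q
  colour : Q × A × Q → Set (Fin k)

variable {Q A : Type} {k : ℕ}

/-- `ρ` is a run of `M` on the infinite word `w`. -/
def SGRA.IsRun (M : SGRA Q A k) (w : ℕ → A) (ρ : ℕ → Q) : Prop :=
  ∀ i, (ρ i, w i, ρ (i + 1)) ∈ M.δ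

/-- Transitions occurring infinitely often in the run `ρ` on `w`. -/
def SGRA.InfTrans (M : SGRA Q A k) (w : ℕ → A) (ρ : ℕ → Q) : Set (Q × A × Q) :=
  {τ | ∀ N, ∃ i ≥ N, (ρ i, w i, ρ (i + 1)) = τ}

/-- A run is accepting iff the union of the colours of the transitions occurring
infinitely often is exactly `{①, …, ⓚ₋₁}` (all colours except `⓪`). -/
def SGRA.AccRun [NeZero k] (M : SGRA Q A k) (w : ℕ → A) (ρ : ℕ → Q) : Prop :=
  M.IsRun w ρ ∧ (⋃ τ ∈ M.InfTrans w ρ, M.colour τ) = {c : Fin k | c ≠ 0}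

/-- The ω-language of the SGRA `M`. -/
def SGRA.Lang [NeZero k] (M : SGRA Q A k) : Set (ℕ → A) :=
  {w | ∃ ρ : ℕ → Q, ρ 0 ∈ M.I ∧ M.AccRun w ρ}

/-- One-step successor relation. -/
def SGRA.Step (M : SGRA Q A k) (q r : Q) : Prop := ∃ a, (q, a, r) ∈ M.δ

/-- Reachability along transitions of `M`. -/
def SGRA.Reach (M : SGRA Q A k) : Q → Q → Prop := Relation.ReflTransGen M.Step

/-- Reachability using only non-`⓪` transitions. -/
def SGRA.NZReach [NeZero k] (M : SGRA Q A k) : Q → Q → Prop :=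
  Relation.ReflTransGen (fun q r => ∃ a, (q, a, r) ∈ M.δ ∧ (0 : Fin k) ∉ M.colour (q, a, r))

/-! An accepting run eventually takes only transitions that it takes infinitely often; these
avoid `⓪` and together carry every other colour. Hence the states visited infinitely often are
mutually reachable by non-`⓪` transitions, and a stretch of the run from such a state back to
itself that is long enough to meet every colour is the required cycle. Conversely, a path from an
initial state to the cycle, followed by the cycle repeated forever, is an accepting run: the
transitions it takes infinitely often are exactly those of the cycle. -/

open Filter Relation

theorem Relation.ReflTransGen.of_seq {α : Type*} {r : α → α → Prop} {u : ℕ → α} {m n : ℕ}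
    (hmn : m ≤ n) (h : ∀ i, m ≤ i → i < n → r (u i) (u (i + 1))) :
    ReflTransGen r (u m) (u n) := by
  induction n, hmn using Nat.le_induction with
  | base => exact .refl
  | succ n hmn ih => exact (ih fun i hm hi => h i hm (by omega)).tail (h n hmn (by omega))

theorem Filter.eventually_frequently_eq_of_finite {α : Type*} [Finite α] (u : ℕ → α) :
    ∀ᶠ i in atTop, ∃ᶠ j in atTop, u j = u i := by
  have key : ∀ x, ∀ᶠ i in atTop, u i = x → ∃ᶠ j in atTop, u j = x := fun x => by
    by_cases hx : ∃ᶠ j in atTop, u j = x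
    · exact .of_forall fun _ _ => hx
    · exact (not_frequently.1 hx).mono fun _ hne heq => absurd heq hne
  exact (eventually_all.2 key).mono fun i hi => hi _ rfl

theorem apply_add_one_mod_of_apply_zero_eq {α : Type*} {σ : ℕ → α} {n : ℕ} (hn : 0 < n)
    (hσ : σ 0 = σ n) (i : ℕ) : σ ((i + 1) % n) = σ (i % n + 1) := by
  rw [← Nat.mod_add_mod]
  rcases Nat.lt_or_eq_of_le (Nat.mod_lt i hn) with hlt | heq
  · rw [Nat.mod_eq_of_lt hlt]
  · rw [show i % n + 1 = n from heq, Nat.mod_self, hσ]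

namespace SGRA

variable {M : SGRA Q A k} {w : ℕ → A} {ρ : ℕ → Q}

theorem mem_infTrans_iff {τ : Q × A × Q} :
    τ ∈ M.InfTrans w ρ ↔ ∃ᶠ i in atTop, (ρ i, w i, ρ (i + 1)) = τ :=
  frequently_atTop.symm

theorem accRun_iff [NeZero k] : M.AccRun w ρ ↔ M.IsRun w ρ ∧
    (∀ τ ∈ M.InfTrans w ρ, (0 : Fin k) ∉ M.colour τ) ∧
    ∀ c ≠ 0, ∃ τ ∈ M.InfTrans w ρ, c ∈ M.colour τ := by
  refine and_congr_right fun _ => ?_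
  simp only [Set.ext_iff, Set.mem_iUnion₂, Set.mem_ofPred_eq, exists_prop]
  constructor
  · intro h
    exact ⟨fun τ hτ h0 => (h 0).1 ⟨τ, hτ, h0⟩ rfl, fun c hc => (h c).2 hc⟩
  · rintro ⟨h0, hc⟩ c
    exact ⟨fun ⟨τ, hτ, hcτ⟩ hc0 => h0 τ hτ (hc0 ▸ hcτ), hc c⟩

theorem frequently_eq_of_mem_infTrans {i : ℕ} (h : (ρ i, w i, ρ (i + 1)) ∈ M.InfTrans w ρ) :
    ∃ᶠ j in atTop, ρ j = ρ i :=
  (mem_infTrans_iff.1 h).mono fun _ hj => congrArg Prod.fst hj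

theorem eventually_mem_infTrans [Finite Q] [Finite A] (w : ℕ → A) (ρ : ℕ → Q) :
    ∀ᶠ i in atTop, (ρ i, w i, ρ (i + 1)) ∈ M.InfTrans w ρ :=
  (eventually_frequently_eq_of_finite fun i => (ρ i, w i, ρ (i + 1))).mono fun _ h =>
    mem_infTrans_iff.2 h

theorem IsRun.reach (h : M.IsRun w ρ) (n : ℕ) : M.Reach (ρ 0) (ρ n) :=
  ReflTransGen.of_seq n.zero_le fun i _ _ => ⟨w i, h i⟩

theorem infTrans_cons (q : Q) (a : A) :
    M.InfTrans (fun | 0 => a | i + 1 => w i) (fun | 0 => q | i + 1 => ρ i) = M.InfTrans w ρ := by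
  ext τ
  refine ⟨fun h N => ?_, fun h N => ?_⟩
  · obtain ⟨_ | i, hi, hτ⟩ := h (N + 1)
    · omega
    · exact ⟨i, by omega, hτ⟩
  · obtain ⟨i, hi, hτ⟩ := h N
    exact ⟨i + 1, by omega, hτ⟩

section Acceptance

variable [NeZero k]

theorem AccRun.nzReach (hacc : M.AccRun w ρ) {N : ℕ}
    (hN : ∀ i ≥ N, (ρ i, w i, ρ (i + 1)) ∈ M.InfTrans w ρ) {i j : ℕ} (hi : N ≤ i)
    (hij : i ≤ j) : M.NZReach (ρ i) (ρ j) :=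
  ReflTransGen.of_seq hij fun l hl _ =>
    ⟨w l, hacc.1 l, (accRun_iff.1 hacc).2.1 _ (hN l (hi.trans hl))⟩

theorem AccRun.exists_cycle (hacc : M.AccRun w ρ) {N : ℕ}
    (hN : ∀ i ≥ N, (ρ i, w i, ρ (i + 1)) ∈ M.InfTrans w ρ) {D : Set Q}
    (hD : ∀ i ≥ N, ρ i ∈ D) :
    ∃ (n : ℕ) (σ : ℕ → Q) (a : ℕ → A), 0 < n ∧ σ 0 = σ n ∧
      (∀ j < n, σ j ∈ D ∧ (σ j, a j, σ (j + 1)) ∈ M.δ ∧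
        (0 : Fin k) ∉ M.colour (σ j, a j, σ (j + 1))) ∧
      ∀ c : Fin k, c ≠ 0 → ∃ j < n, c ∈ M.colour (σ j, a j, σ (j + 1)) := by
  obtain ⟨hrun, hnz, hcov⟩ := accRun_iff.1 hacc
  have hwindow : ∀ c : Fin k, ∀ᶠ e in atTop, c ≠ 0 →
      ∃ j, N + j < e ∧ c ∈ M.colour (ρ (N + j), w (N + j), ρ (N + j + 1)) := by
    intro c
    by_cases hc : c = 0
    · exact .of_forall fun _ h => absurd hc h
    obtain ⟨τ, hτ, hcτ⟩ := hcov c hc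
    obtain ⟨i, hi, rfl⟩ := hτ N
    obtain ⟨j, rfl⟩ := Nat.exists_eq_add_of_le hi
    exact (eventually_gt_atTop (N + j)).mono fun e he _ => ⟨j, he, hcτ⟩
  have hreturn : ∃ᶠ e in atTop, ρ e = ρ N := frequently_eq_of_mem_infTrans (hN N le_rfl)
  obtain ⟨e, ⟨hcolours, hNe⟩, hret⟩ :=
    (((eventually_all.2 hwindow).and (eventually_gt_atTop N)).and_frequently hreturn).exists
  obtain ⟨n, rfl⟩ := Nat.exists_eq_add_of_lt hNe
  refine ⟨n + 1, fun j => ρ (N + j), fun j => w (N + j), n.succ_pos, hret.symm,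
    fun j _ => ⟨hD _ (N.le_add_right j), hrun _, hnz _ (hN _ (N.le_add_right j))⟩,
    fun c hc => ?_⟩
  obtain ⟨j, hj, hcj⟩ := hcolours c hc
  exact ⟨j, by omega, hcj⟩

def AcceptsFrom (M : SGRA Q A k) (q : Q) : Prop :=
  ∃ (w : ℕ → A) (ρ : ℕ → Q), ρ 0 = q ∧ M.AccRun w ρ

theorem AcceptsFrom.of_step {q p : Q} (hstep : M.Step q p) (hp : M.AcceptsFrom p) :
    M.AcceptsFrom q := by
  obtain ⟨a, ha⟩ := hstep
  obtain ⟨w, ρ, rfl, hrun, hcol⟩ := hp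
  refine ⟨fun | 0 => a | i + 1 => w i, fun | 0 => q | i + 1 => ρ i, rfl,
    fun | 0 => ha | i + 1 => hrun i, ?_⟩
  rw [infTrans_cons]
  exact hcol

theorem AcceptsFrom.of_reach {q p : Q} (h : M.Reach q p) (hp : M.AcceptsFrom p) :
    M.AcceptsFrom q :=
  ReflTransGen.head_induction_on h hp fun hstep _ ih => ih.of_step hstep

theorem acceptsFrom_of_cycle {n : ℕ} {σ : ℕ → Q} {a : ℕ → A} (hn : 0 < n) (hσ : σ 0 = σ n)
    (hstep : ∀ j < n,
      (σ j, a j, σ (j + 1)) ∈ M.δ ∧ (0 : Fin k) ∉ M.colour (σ j, a j, σ (j + 1)))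
    (hcov : ∀ c : Fin k, c ≠ 0 → ∃ j < n, c ∈ M.colour (σ j, a j, σ (j + 1))) :
    M.AcceptsFrom (σ 0) := by
  set cyc : ℕ → Q × A × Q := fun j => (σ j, a j, σ (j + 1))
  have htrans : ∀ i, (σ (i % n), a (i % n), σ ((i + 1) % n)) = cyc (i % n) := fun i => by
    rw [apply_add_one_mod_of_apply_zero_eq hn hσ]
  have hinf : ∀ j < n, cyc j ∈ M.InfTrans (fun i => a (i % n)) (fun i => σ (i % n)) :=
    fun j hj N => ⟨j + N * n, by nlinarith, (htrans _).trans (by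
      rw [Nat.add_mul_mod_self_right, Nat.mod_eq_of_lt hj])⟩
  refine ⟨fun i => a (i % n), fun i => σ (i % n), congrArg σ (Nat.zero_mod n),
    accRun_iff.2 ⟨fun i => ?_, ?_, fun c hc => ?_⟩⟩
  · rw [htrans]
    exact (hstep _ (Nat.mod_lt i hn)).1
  · rintro τ hτ
    obtain ⟨i, -, rfl⟩ := hτ 0
    rw [htrans]
    exact (hstep _ (Nat.mod_lt i hn)).2
  · obtain ⟨j, hj, hcj⟩ := hcov c hc
    exact ⟨cyc j, hinf j hj, hcj⟩

end Acceptance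

end SGRA

/-- `L(A) ≠ ∅` iff there is a set of states `D`, all mutually reachable
using only non-`⓪` transitions, such that `D` is reachable from `I` in `A` (possibly
using `⓪`-transitions), and the non-`⓪` transitions inside `D` carry together all
colours `①, …, ⓚ₋₁` on some cycle within `D`. -/
theorem sgra_nonempty_iff_scc [Fintype Q] [Fintype A] [NeZero k] (M : SGRA Q A k) :
    M.Lang ≠ ∅ ↔
      ∃ D : Set Q,
        (∀ q ∈ D, ∀ r ∈ D, M.NZReach q r) ∧
        (∃ q ∈ D, ∃ q0 ∈ M.I, M.Reach q0 q) ∧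
        (∃ (n : ℕ) (σ : ℕ → Q) (a : ℕ → A), 0 < n ∧ σ 0 = σ n ∧
          (∀ j < n, σ j ∈ D ∧ (σ j, a j, σ (j + 1)) ∈ M.δ ∧
            (0 : Fin k) ∉ M.colour (σ j, a j, σ (j + 1))) ∧
          ∀ c : Fin k, c ≠ 0 → ∃ j < n, c ∈ M.colour (σ j, a j, σ (j + 1))) := by
  rw [← Set.nonempty_iff_ne_empty]
  constructor
  · rintro ⟨w, ρ, hI, hacc⟩
    obtain ⟨N, hN⟩ := eventually_atTop.1 (M.eventually_mem_infTrans w ρ)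
    have hD : ∀ i ≥ N, ρ i ∈ {q | ∃ᶠ j in atTop, ρ j = q} := fun i hi =>
      SGRA.frequently_eq_of_mem_infTrans (hN i hi)
    refine ⟨{q | ∃ᶠ j in atTop, ρ j = q}, ?_, ⟨ρ N, hD N le_rfl, ρ 0, hI, hacc.1.reach N⟩,
      hacc.exists_cycle hN hD⟩
    intro q hq r hr
    obtain ⟨i, hi, rfl⟩ := frequently_atTop.1 hq N
    obtain ⟨j, hj, rfl⟩ := frequently_atTop.1 hr i
    exact hacc.nzReach hN hi hj
  · rintro ⟨D, hmut, ⟨q, hqD, q0, hq0, hreach⟩, n, σ, a, hn, hσ, hstep, hcov⟩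
    have hreach_cycle : M.Reach q (σ 0) := ReflTransGen.mono
      (fun _ _ ⟨b, hb, _⟩ => ⟨b, hb⟩) _ _ (hmut q hqD (σ 0) (hstep 0 hn).1)
    obtain ⟨w, ρ, rfl, hacc⟩ :=
      (SGRA.acceptsFrom_of_cycle hn hσ (fun j hj => (hstep j hj).2) hcov).of_reach
        (hreach.trans hreach_cycle)
    exact ⟨w, ρ, hq0, hacc⟩
end

section
/- Let A be a Büchi automaton and C an initial deterministic accepting SCC of A: after removing accepting transitions outside C and all useless states, the resulting automaton is deterministic. Then for every infinite word w there is at most one run of A on w that visits accepting transitions of C infinitely often; hence w has a run accepted via C iff the unique maximal deterministic run through the pruned automaton takes accepting transitions of C infinitely often. -/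
variable {Q A : Type}

/-- A word is accepted from `q` (i.e. `q` is not useless). -/
def BA.AcceptsFrom (M : BA Q A) (q : Q) : Prop :=
  ∃ (w : ℕ → A) (ρ : ℕ → Q), ρ 0 = q ∧ M.IsRun w ρ ∧ M.InfAcc w ρ

/-- A state is useless iff no word is accepted from it. -/
def BA.Useless (M : BA Q A) (q : Q) : Prop := ¬ M.AcceptsFrom q

/-- The automaton obtained from `M` by removing accepting transitions outside `C`. -/
def BA.restrAcc (M : BA Q A) (C : Set Q) : BA Q A :=
  ⟨M.δ, M.I, {t ∈ M.F | t.1 ∈ C ∧ t.2.2 ∈ C}⟩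

/-- The automaton obtained from `M` by removing useless states. -/
def BA.prune (M : BA Q A) : BA Q A :=
  ⟨{t ∈ M.δ | ¬ M.Useless t.1 ∧ ¬ M.Useless t.2.2}, {q ∈ M.I | ¬ M.Useless q}, M.F⟩

/-- The run `ρ` is accepted via `C`: it takes transitions of `F ∩ δ|C` infinitely
often. -/
def BA.InfAccVia (M : BA Q A) (C : Set Q) (w : ℕ → A) (ρ : ℕ → Q) : Prop :=
  ∀ N, ∃ i ≥ N, (ρ i, w i, ρ (i + 1)) ∈ M.F ∧ ρ i ∈ C ∧ ρ (i + 1) ∈ C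


lemma not_useless_of_infAccVia (M : BA Q A) (C : Set Q) (w : ℕ → A) (ρ : ℕ → Q)
    (hr : M.IsRun w ρ) (ha : M.InfAccVia C w ρ) :
    ∀ i, ¬ (M.restrAcc C).Useless (ρ i) := by
  intro i hu
  apply hu
  refine ⟨fun j => w (i + j), fun j => ρ (i + j), rfl, fun j => hr (i + j), ?_⟩
  intro N
  obtain ⟨k, hk, hFm, h1, h2⟩ := ha (i + N)
  refine ⟨k - i, by omega, ?_⟩
  have heq : i + (k - i) = k := by omega
  have heq2 : i + (k - i + 1) = k + 1 := by omega
  simp only [heq, heq2]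
  exact ⟨hFm, h1, h2⟩

lemma run_in_pruned (M : BA Q A) (C : Set Q) (w : ℕ → A) (ρ : ℕ → Q)
    (hI : ρ 0 ∈ M.I) (hr : M.IsRun w ρ) (ha : M.InfAccVia C w ρ) :
    ρ 0 ∈ ((M.restrAcc C).prune).I ∧ ((M.restrAcc C).prune).IsRun w ρ := by
  have hu := not_useless_of_infAccVia M C w ρ hr ha
  exact ⟨⟨hI, hu 0⟩, fun i => ⟨hr i, hu i, hu (i + 1)⟩⟩

/-- if `C` is an initial deterministic accepting SCC of `M` (the
`C`-pruned automaton — accepting transitions restricted to `C`, useless states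
removed — is deterministic), then for every word there is at most one run of `M`
accepted via `C`; hence `w` has a run of `M` accepted via `C` iff the
(unique) run through the pruned automaton is accepted via `C`. -/
theorem initial_deterministic_unique_accepting_run (M : BA Q A) (C : Set Q)
    (hSCC : M.IsSCC C) (hAcc : M.AccSCC C) (hF : M.F ⊆ M.δ)
    (hIdet : ∀ q ∈ ((M.restrAcc C).prune).I, ∀ q' ∈ ((M.restrAcc C).prune).I, q = q')
    (hdet : ∀ (q : Q) (a : A) (r r' : Q),
      (q, a, r) ∈ ((M.restrAcc C).prune).δ → (q, a, r') ∈ ((M.restrAcc C).prune).δ →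
      r = r')
    (w : ℕ → A) :
    (∀ ρ₁ ρ₂ : ℕ → Q,
      (ρ₁ 0 ∈ M.I ∧ M.IsRun w ρ₁ ∧ M.InfAccVia C w ρ₁) →
      (ρ₂ 0 ∈ M.I ∧ M.IsRun w ρ₂ ∧ M.InfAccVia C w ρ₂) → ρ₁ = ρ₂) ∧
    ((∃ ρ : ℕ → Q, ρ 0 ∈ M.I ∧ M.IsRun w ρ ∧ M.InfAccVia C w ρ) ↔
      (∃ ρ : ℕ → Q, ρ 0 ∈ ((M.restrAcc C).prune).I ∧
        ((M.restrAcc C).prune).IsRun w ρ ∧ M.InfAccVia C w ρ)) := by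
  constructor
  · intro ρ₁ ρ₂ ⟨hI1, hr1, ha1⟩ ⟨hI2, hr2, ha2⟩
    obtain ⟨hI1', hr1'⟩ := run_in_pruned M C w ρ₁ hI1 hr1 ha1
    obtain ⟨hI2', hr2'⟩ := run_in_pruned M C w ρ₂ hI2 hr2 ha2
    funext n
    induction n with
    | zero => exact hIdet _ hI1' _ hI2'
    | succ n ih => exact hdet (ρ₁ n) (w n) _ _ (hr1' n) (ih ▸ hr2' n)
  · constructor
    · rintro ⟨ρ, hI, hr, ha⟩
      obtain ⟨hI', hr'⟩ := run_in_pruned M C w ρ hI hr ha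
      exact ⟨ρ, hI', hr', ha⟩
    · rintro ⟨ρ, hI, hr, ha⟩
      exact ⟨ρ, hI.1, fun i => (hr i).1, ha⟩
end
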